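/- arXiv:1408.4994 — 6 statements merged into one kernel-verified Lean document; each statement's English description precedes it below -/
import Mathlib

section
/- Let q = n1 - n2 with 0 ≤ n2 < n1, let A_1, …, A_{n1} be complex m1 × m2 matrices each of rank at most r, and let γ_{ik} ∈ ℂ (i = 1,…,q, k = 1,…,n1) be scalars such that γ_{i1} A_1 + γ_{i2} A_2 + ⋯ + γ_{i n1} A_{n1} = 0 for every i = 1,…,q. If the q × q matrix Γ = (γ_{ik})_{1 ≤ i,k ≤ q} is invertible, then dim C(A_1, A_2, …, A_{n1}) ≤ n2 · r. -/
/-!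
Since the square block `Γ` of the relations is invertible, the relations express each of
`A_1, …, A_q` as a combination of `A_{q+1}, …, A_{n1}`: modulo the span of the latter, the
former solve an invertible homogeneous system. So every column of every `A_k` lies in the sum of the
column spaces of these at most `n2` matrices, each of dimension at most `r`.
-/

open Module Submodule Matrix

theorem Matrix.eq_zero_of_sum_smul_eq_zero {R M κ : Type*} [CommRing R] [AddCommGroup M]
    [Module R M] [Fintype κ] [DecidableEq κ] {Γ : Matrix κ κ R} (hΓ : IsUnit Γ.det)
    {w : κ → M} (hw : ∀ i, ∑ j, Γ i j • w j = 0) : w = 0 := by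
  funext j
  calc w j = ∑ j', (Γ⁻¹ * Γ) j j' • w j' := by simp [nonsing_inv_mul Γ hΓ, one_apply]
    _ = ∑ i, Γ⁻¹ j i • ∑ j', Γ i j' • w j' := by
      simp only [mul_apply, Finset.sum_smul, Finset.smul_sum, smul_smul]
      exact Finset.sum_comm
    _ = 0 := by simp [hw]

theorem mem_span_image_compl_range_of_isUnit_det {R M ι κ : Type*} [CommRing R]
    [AddCommGroup M] [Module R M] [Fintype ι] [Fintype κ] [DecidableEq κ]
    {v : ι → M} {γ : κ → ι → R} (hγ : ∀ i, ∑ k, γ i k • v k = 0) (e : κ ↪ ι)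
    (hΓ : IsUnit (Matrix.of fun i j => γ i (e j)).det) (k : ι) :
    v k ∈ span R (v '' (Set.range e)ᶜ) := by
  classical
  set W := span R (v '' (Set.range e)ᶜ)
  by_cases hk : k ∈ Set.range e
  swap
  · exact subset_span ⟨k, hk, rfl⟩
  obtain ⟨j, rfl⟩ := hk
  have hvanish : ∀ k ∉ Set.range e, W.mkQ (v k) = 0 := fun k hk =>
    (Quotient.mk_eq_zero W).2 (subset_span ⟨k, hk, rfl⟩)
  have hrel : ∀ i, ∑ j, Matrix.of (fun i j => γ i (e j)) i j • W.mkQ (v (e j)) = 0 := by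
    intro i
    have h := congrArg W.mkQ (hγ i)
    simp only [map_sum, map_smul, map_zero] at h
    rw [← Finset.sum_subset (Finset.subset_univ (Finset.univ.map e)), Finset.sum_map] at h
    · exact h
    · intro k _ hk
      rw [hvanish k (by simpa using hk), smul_zero]
  exact (Quotient.mk_eq_zero W).1 (congrFun (eq_zero_of_sum_smul_eq_zero hΓ hrel) j)

theorem Matrix.span_cols_le_of_mem_span {R m n ι : Type*} [CommSemiring R]
    {A : ι → Matrix m n R} {s : Finset ι} (h : ∀ k, A k ∈ span R (A '' s)) :
    span R (Set.range fun p : ι × n => (A p.1).col p.2) ≤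
      ⨆ l ∈ s, span R (Set.range (A l).col) := by
  rw [span_le]
  rintro _ ⟨⟨k, j⟩, rfl⟩
  let colj : Matrix m n R →ₗ[R] m → R :=
    { toFun := fun M => M.col j, map_add' := fun _ _ => rfl, map_smul' := fun _ _ => rfl }
  refine span_le.2 ?_ (apply_mem_span_image_of_mem_span colj (h k))
  rintro _ ⟨_, ⟨l, hl, rfl⟩, rfl⟩
  exact le_biSup (fun l => span R (Set.range (A l).col)) hl (subset_span ⟨j, rfl⟩)

theorem Submodule.finrank_biSup_le_card_mul {K V ι : Type*} [DivisionRing K] [AddCommGroup V]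
    [Module K V] [FiniteDimensional K V] (s : Finset ι) (f : ι → Submodule K V) {r : ℕ}
    (h : ∀ i ∈ s, finrank K (f i) ≤ r) :
    finrank K ↥(⨆ i ∈ s, f i) ≤ s.card * r := by
  classical
  induction s using Finset.induction_on with
  | empty => simp
  | insert a s ha ih =>
    rw [Finset.iSup_insert, Finset.card_insert_of_notMem ha, add_one_mul, add_comm]
    calc finrank K ↥(f a ⊔ ⨆ i ∈ s, f i)
        ≤ finrank K (f a) + finrank K ↥(⨆ i ∈ s, f i) :=
          finrank_add_le_finrank_add_finrank _ _
      _ ≤ r + s.card * r := add_le_add (h a (Finset.mem_insert_self a s))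
          (ih fun i hi => h i (Finset.mem_insert_of_mem hi))

theorem stmt1_general (n1 n2 m1 m2 r : ℕ)
    (A : Fin n1 → Matrix (Fin m1) (Fin m2) ℂ)
    (hrank : ∀ k : Fin n1, (A k).rank ≤ r)
    (γ : Fin (n1 - n2) → Fin n1 → ℂ)
    (hsum : ∀ i : Fin (n1 - n2), ∑ k : Fin n1, γ i k • A k = 0)
    (hΓ : IsUnit (Matrix.of fun i k : Fin (n1 - n2) =>
      γ i (Fin.castLE (Nat.sub_le n1 n2) k)).det) :
    Module.finrank ℂ
      (Submodule.span ℂ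
        (Set.range fun p : Fin n1 × Fin m2 => fun i : Fin m1 => A p.1 i p.2)) ≤
      n2 * r := by
  classical
  set e := Fin.castLEEmb (Nat.sub_le n1 n2)
  set S : Finset (Fin n1) := (Finset.univ.map e)ᶜ
  have hS : (S : Set (Fin n1)) = (Set.range e)ᶜ := by simp [S]
  have hcard : S.card ≤ n2 := by simp [S, Finset.card_compl]; omega
  have hmem (k : Fin n1) : A k ∈ span ℂ (A '' S) :=
    hS ▸ mem_span_image_compl_range_of_isUnit_det hsum e hΓ k
  calc _ ≤ finrank ℂ ↥(⨆ l ∈ S, span ℂ (Set.range (A l).col)) :=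
        finrank_mono (span_cols_le_of_mem_span hmem)
    _ ≤ S.card * r :=
        finrank_biSup_le_card_mul S _ fun l _ => rank_eq_finrank_span_cols (A l) ▸ hrank l
    _ ≤ n2 * r := Nat.mul_le_mul_right r hcard

/-- If `A_1,…,A_{n1}` are complex `m1 × m2` matrices of rank at most
`r` satisfying `γ_{i1} A_1 + ⋯ + γ_{i n1} A_{n1} = 0` for `i = 1,…,q` with
`q = n1 - n2`, `0 ≤ n2 < n1`, and the `q × q` matrix `Γ = (γ_{ik})_{i,k ≤ q}` is
invertible, then `dim C(A_1,…,A_{n1}) ≤ n2 · r`. -/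
theorem stmt1 (n1 n2 m1 m2 r : ℕ) (hn : n2 < n1)
    (A : Fin n1 → Matrix (Fin m1) (Fin m2) ℂ)
    (hrank : ∀ k : Fin n1, (A k).rank ≤ r)
    (γ : Fin (n1 - n2) → Fin n1 → ℂ)
    (hsum : ∀ i : Fin (n1 - n2), ∑ k : Fin n1, γ i k • A k = 0)
    (hΓ : IsUnit (Matrix.of fun i k : Fin (n1 - n2) =>
      γ i (Fin.castLE (Nat.sub_le n1 n2) k)).det) :
    Module.finrank ℂ
      (Submodule.span ℂ
        (Set.range fun p : Fin n1 × Fin m2 => fun i : Fin m1 => A p.1 i p.2)) ≤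
      n2 * r :=
  stmt1_general n1 n2 m1 m2 r A hrank γ hsum hΓ
end

section
/- Let q = n1 - n2 with 0 ≤ n2 < n1, let A_1, …, A_{n1} be complex m1 × m2 matrices each of rank at most r, and let γ_{ik} ∈ ℂ (i = 1,…,q, k = 1,…,n1) satisfy γ_{i1} A_1 + ⋯ + γ_{i n1} A_{n1} = 0 for every i = 1,…,q, with the q × q matrix Γ = (γ_{ik})_{1 ≤ i,k ≤ q} invertible. If, in addition, each of the n2 column spaces C(A_{q+1}), C(A_{q+2}), …, C(A_{n1}) has dimension exactly r and these n2 subspaces are independent (their sum is a direct sum), then dim C(A_1, A_2, …, A_{n1}) = n2 · r. -/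
open Module Submodule

/-!
Each relation `∑ₖ γ i k • A k = 0` expresses `∑_{k ≤ q} γ i k • A k` through the last `n2`
matrices, and inverting `Γ` expresses each of `A_1, …, A_q` that way. So every column of every
`A k` lies in `C(A_{q+1}) ⊕ ⋯ ⊕ C(A_{n1})`, whose dimension is `n2 · r`.
-/

section FinrankIndep

variable {K V ι : Type*} [DivisionRing K] [AddCommGroup V] [Module K V] [FiniteDimensional K V]
  {p : ι → Submodule K V}

theorem Submodule.finrank_finset_sup_of_iSupIndep (h : iSupIndep p) (s : Finset ι) :
    finrank K ↥(s.sup p) = ∑ i ∈ s, finrank K (p i) := by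
  induction s using Finset.cons_induction with
  | empty => simp
  | cons a s ha ih =>
    have hdisj : Disjoint (p a) (s.sup p) := by
      simpa [Finset.sup_eq_iSup] using h.disjoint_biSup (y := ↑s) ha
    rw [Finset.sup_cons, Finset.sum_cons, ← ih, ← finrank_sup_add_finrank_inf_eq,
      hdisj.eq_bot, finrank_bot, add_zero]

theorem Submodule.finrank_iSup_of_iSupIndep [Fintype ι] (h : iSupIndep p) :
    finrank K ↥(⨆ i, p i) = ∑ i, finrank K (p i) := by
  rw [← Finset.sup_univ_eq_iSup, finrank_finset_sup_of_iSupIndep h]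

end FinrankIndep

theorem Matrix.eq_zero_of_isUnit_det_of_sum_smul_eq_zero {κ R M : Type*} [Fintype κ]
    [DecidableEq κ] [CommRing R] [AddCommGroup M] [Module R M] {B : Matrix κ κ R}
    (hB : IsUnit B.det) {w : κ → M} (h : ∀ i, ∑ k, B i k • w k = 0) : w = 0 := by
  funext j
  calc w j = ∑ i, B⁻¹ j i • ∑ k, B i k • w k := by
        simp_rw [Finset.smul_sum, smul_smul]
        rw [Finset.sum_comm]
        simp_rw [← Finset.sum_smul, ← Matrix.mul_apply, Matrix.nonsing_inv_mul B hB,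
          Matrix.one_apply, ite_smul, one_smul, zero_smul, Finset.sum_ite_eq, Finset.mem_univ,
          if_true]
    _ = 0 := by simp [h]

theorem Fintype.card_fin_subtype_le_val (n q : ℕ) :
    Fintype.card {k : Fin n // q ≤ (k : ℕ)} = n - q := by
  simp only [← not_lt]
  rw [Fintype.card_subtype_compl, Fintype.card_fin, Fintype.card_subtype, Fin.card_filter_val_lt]
  omega

theorem Submodule.mem_of_sum_smul_eq_zero_of_isUnit_det {R M : Type*} [CommRing R]
    [AddCommGroup M] [Module R M] {n q : ℕ} (hq : q ≤ n) {v : Fin n → M}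
    {γ : Fin q → Fin n → R} (hγ : ∀ i, ∑ k, γ i k • v k = 0)
    (hΓ : IsUnit (Matrix.of fun i k : Fin q => γ i (Fin.castLE hq k)).det)
    {S : Submodule R M} (hS : ∀ k : Fin n, q ≤ (k : ℕ) → v k ∈ S) (k : Fin n) : v k ∈ S := by
  by_cases hk : q ≤ (k : ℕ)
  · exact hS k hk
  have hhead : (fun j : Fin q => S.mkQ (v (Fin.castLE hq j))) = 0 := by
    refine Matrix.eq_zero_of_isUnit_det_of_sum_smul_eq_zero hΓ fun i => ?_
    calc ∑ j, γ i (Fin.castLE hq j) • S.mkQ (v (Fin.castLE hq j))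
        = ∑ k, γ i k • S.mkQ (v k) := by
          refine Fintype.sum_of_injective _ (Fin.castLE_injective hq) _ _ (fun k hk => ?_)
            fun _ => rfl
          have hqk : q ≤ (k : ℕ) := by
            by_contra hlt
            exact hk ⟨⟨k, not_le.mp hlt⟩, rfl⟩
          rw [mkQ_apply, (Quotient.mk_eq_zero S).mpr (hS k hqk), smul_zero]
      _ = S.mkQ (∑ k, γ i k • v k) := by simp only [map_sum, map_smul]
      _ = 0 := by rw [hγ i, map_zero]
  exact (Quotient.mk_eq_zero S).mp (congrFun hhead ⟨k, not_le.mp hk⟩)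

theorem stmt2_general (n1 n2 m1 m2 r : ℕ) (hn : n2 < n1)
    (A : Fin n1 → Matrix (Fin m1) (Fin m2) ℂ)
    (γ : Fin (n1 - n2) → Fin n1 → ℂ)
    (hsum : ∀ i : Fin (n1 - n2), ∑ k : Fin n1, γ i k • A k = 0)
    (hΓ : IsUnit (Matrix.of fun i k : Fin (n1 - n2) =>
      γ i (Fin.castLE (Nat.sub_le n1 n2) k)).det)
    (hdim : ∀ k : {j : Fin n1 // n1 - n2 ≤ (j : ℕ)},
      Module.finrank ℂ
        (Submodule.span ℂ
          (Set.range fun j : Fin m2 => fun i : Fin m1 => A k.val i j)) = r)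
    (hindep : iSupIndep fun k : {j : Fin n1 // n1 - n2 ≤ (j : ℕ)} =>
      Submodule.span ℂ
        (Set.range fun j : Fin m2 => fun i : Fin m1 => A k.val i j)) :
    Module.finrank ℂ
      (Submodule.span ℂ
        (Set.range fun p : Fin n1 × Fin m2 => fun i : Fin m1 => A p.1 i p.2)) =
      n2 * r := by
  set W := ⨆ k : {j : Fin n1 // n1 - n2 ≤ (j : ℕ)},
    span ℂ (Set.range fun j : Fin m2 => fun i : Fin m1 => A k.val i j)
  have hcols (j : Fin m2) (k : Fin n1) : (fun i => A k i j) ∈ W :=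
    mem_of_sum_smul_eq_zero_of_isUnit_det (Nat.sub_le n1 n2) (v := fun k i => A k i j) (S := W)
      (fun l => funext fun i => by
        simpa [Matrix.sum_apply] using congrFun (congrFun (hsum l) i) j)
      hΓ (fun k hk => mem_iSup_of_mem ⟨k, hk⟩ (subset_span ⟨j, rfl⟩)) k
  have hspan : span ℂ (Set.range fun p : Fin n1 × Fin m2 => fun i : Fin m1 => A p.1 i p.2) = W :=
    le_antisymm (span_le.mpr <| Set.range_subset_iff.mpr fun p => hcols p.2 p.1)
      (iSup_le fun k => span_mono <| Set.range_subset_iff.mpr fun j => ⟨(k.val, j), rfl⟩)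
  rw [hspan, finrank_iSup_of_iSupIndep hindep, Finset.sum_congr rfl fun k _ => hdim k,
    Finset.sum_const, Finset.card_univ, Fintype.card_fin_subtype_le_val,
    Nat.sub_sub_self hn.le, smul_eq_mul]

/-- Under the hypotheses of Statement 1, if in addition each of the
`n2` column spaces `C(A_{q+1}),…,C(A_{n1})` has dimension exactly `r` and these
subspaces are independent (their sum is a direct sum), then
`dim C(A_1,…,A_{n1}) = n2 · r`. -/
theorem stmt2 (n1 n2 m1 m2 r : ℕ) (hn : n2 < n1)
    (A : Fin n1 → Matrix (Fin m1) (Fin m2) ℂ)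
    (hrank : ∀ k : Fin n1, (A k).rank ≤ r)
    (γ : Fin (n1 - n2) → Fin n1 → ℂ)
    (hsum : ∀ i : Fin (n1 - n2), ∑ k : Fin n1, γ i k • A k = 0)
    (hΓ : IsUnit (Matrix.of fun i k : Fin (n1 - n2) =>
      γ i (Fin.castLE (Nat.sub_le n1 n2) k)).det)
    (hdim : ∀ k : {j : Fin n1 // n1 - n2 ≤ (j : ℕ)},
      Module.finrank ℂ
        (Submodule.span ℂ
          (Set.range fun j : Fin m2 => fun i : Fin m1 => A k.val i j)) = r)
    (hindep : iSupIndep fun k : {j : Fin n1 // n1 - n2 ≤ (j : ℕ)} =>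
      Submodule.span ℂ
        (Set.range fun j : Fin m2 => fun i : Fin m1 => A k.val i j)) :
    Module.finrank ℂ
      (Submodule.span ℂ
        (Set.range fun p : Fin n1 × Fin m2 => fun i : Fin m1 => A p.1 i p.2)) =
      n2 * r :=
  stmt2_general n1 n2 m1 m2 r hn A γ hsum hΓ hdim hindep
end

section
/- Let q = n1 - n2 with 0 ≤ n2 < n1 and fix m1, m2, r. For Lebesgue-almost every coefficient array γ = (γ_{ik}) ∈ ℂ^{q × n1}, the following holds: every family A_1, …, A_{n1} of complex m1 × m2 matrices, each of rank at most r, that satisfies γ_{i1} A_1 + γ_{i2} A_2 + ⋯ + γ_{i n1} A_{n1} = 0 for all i = 1,…,q, also satisfies dim C(A_1, A_2, …, A_{n1}) ≤ n2 · r. -/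
/-!
For almost every `γ` the `q = n1 - n2` rows of `γ` are linearly independent: a family of
`k < dim E` independent vectors spans a proper subspace, which is Haar-null, so by Fubini a
random extra vector keeps the family independent. Independent rows make the relations cut the
dimension of `span {A_k}` down to `n1 - q = n2`. This span is spanned by at most `n2` of the
`A_k` themselves; every column of every `A_k` lies in the sum of their column spaces, each of
dimension at most `r`.
-/

open MeasureTheory Module Submodule Set Matrix

section AeLinearIndependent

variable {𝕜 E : Type*} [RCLike 𝕜] [NormedAddCommGroup E] [NormedSpace 𝕜 E]
  [NormedSpace ℝ E] [IsScalarTower ℝ 𝕜 E] [FiniteDimensional ℝ E]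
  [MeasurableSpace E] [BorelSpace E]
  (μ : Measure E) [μ.IsAddHaarMeasure]

theorem ae_linearIndependent_cons {k : ℕ} (hk : k < finrank 𝕜 E) {w : Fin k → E}
    (hw : LinearIndependent 𝕜 w) :
    ∀ᵐ x ∂μ, LinearIndependent 𝕜 (Fin.cons x w : Fin (k + 1) → E) := by
  have hspan : span 𝕜 (range w) ≠ ⊤ := fun htop => by
    have := finrank_range_le_card (R := 𝕜) w
    rw [Set.finrank, htop, finrank_top, Fintype.card_fin] at this
    omega
  refine measure_mono_null (fun x hx => ?_) <|
    Measure.addHaar_submodule μ ((span 𝕜 (range w)).restrictScalars ℝ) (by simpa using hspan)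
  by_contra hxw
  exact hx (linearIndependent_finCons.2 ⟨hw, hxw⟩)

theorem ae_linearIndependent (k : ℕ) (hk : k ≤ finrank 𝕜 E) :
    ∀ᵐ v ∂Measure.pi fun _ : Fin k => μ, LinearIndependent 𝕜 v := by
  induction k with
  | zero => exact .of_forall fun v => linearIndependent_empty_type
  | succ k ih =>
    have hmeas : MeasurableSet
        {z : E × (Fin k → E) | LinearIndependent 𝕜 (Fin.cons z.1 z.2 : Fin (k + 1) → E)} :=
      (isOpen_setOfPred_linearIndependent.preimage (by fun_prop)).measurableSet
    have hprod : ∀ᵐ z ∂μ.prod (Measure.pi fun _ : Fin k => μ),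
        LinearIndependent 𝕜 (Fin.cons z.1 z.2 : Fin (k + 1) → E) :=
      (Measure.ae_prod_iff_ae_ae hmeas).2 <| (Measure.ae_ae_comm hmeas).2 <|
        (ih (by omega)).mono fun w hw => ae_linearIndependent_cons μ (by omega) hw
    have e := (measurePreserving_piFinSuccAbove (fun _ : Fin (k + 1) => μ) 0).symm
    rw [← e.map_eq, MeasurableEquiv.measurableEmbedding _ |>.ae_map_iff]
    simpa only [MeasurableEquiv.piFinSuccAbove_symm_apply, Fin.insertNthEquiv_zero,
      Fin.consEquiv, Equiv.coe_fn_mk] using hprod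

end AeLinearIndependent

section LinearAlgebra

variable {K V ι : Type*} [Field K] [AddCommGroup V] [Module K V]

theorem finrank_span_range_add_card_le [Fintype ι] {κ : Type*} [Fintype κ] (A : ι → V)
    (γ : κ → ι → K) (hγ : LinearIndependent K γ) (hrel : ∀ i, ∑ k, γ i k • A k = 0) :
    finrank K (span K (range A)) + Fintype.card κ ≤ Fintype.card ι := by
  set L := Fintype.linearCombination K A
  have hker : span K (range γ) ≤ LinearMap.ker L := span_le.2 <| by
    rintro _ ⟨i, rfl⟩
    simpa [L, Fintype.linearCombination_apply] using hrel i
  calc finrank K (span K (range A)) + Fintype.card κ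
      = finrank K (LinearMap.range L) + finrank K (span K (range γ)) := by
        rw [Fintype.range_linearCombination, finrank_span_eq_card hγ]
    _ ≤ finrank K (LinearMap.range L) + finrank K (LinearMap.ker L) := by
        gcongr; exact Submodule.finrank_mono hker
    _ = Fintype.card ι := by
        rw [LinearMap.finrank_range_add_finrank_ker, Module.finrank_fintype_fun_eq_card]

theorem finrank_finset_sup_le [FiniteDimensional K V] (s : Finset ι) (p : ι → Submodule K V) :
    finrank K (s.sup p : Submodule K V) ≤ ∑ i ∈ s, finrank K (p i) :=
  s.apply_sup_le_sum (f := fun q : Submodule K V => finrank K q) (finrank_bot K V)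
    (Submodule.finrank_add_le_finrank_add_finrank _ _)

variable {m n : Type*} [Fintype m] [Fintype n]

theorem finrank_span_cols_le (A : ι → Matrix m n K) {r : ℕ} (hA : ∀ k, (A k).rank ≤ r) :
    finrank K (span K (range fun p : ι × n => fun i => A p.1 i p.2)) ≤
      finrank K (span K (range A)) * r := by
  obtain ⟨t, htA, hspan, hli⟩ := exists_linearIndependent K (range A)
  have : Finite t := hli.finite
  have : Fintype t := .ofFinite t
  have hcols : span K (range fun p : ι × n => fun i => A p.1 i p.2) ≤
      (t.toFinset.sup fun B => span K (range Bᵀ) : Submodule K (m → K)) := by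
    rw [span_le]
    rintro _ ⟨⟨k, j⟩, rfl⟩
    let col : Matrix m n K →ₗ[K] m → K :=
      LinearMap.proj j ∘ₗ (Matrix.transposeLinearEquiv m n K K).toLinearMap
    have hAk : col (A k) ∈ (span K t).map col :=
      mem_map_of_mem (by rw [hspan]; exact subset_span (mem_range_self k))
    rw [map_span] at hAk
    refine span_le.2 ?_ hAk
    rintro _ ⟨B, hB, rfl⟩
    have hle : span K (range Bᵀ) ≤ t.toFinset.sup fun B => span K (range Bᵀ) :=
      Finset.le_sup (f := fun B => span K (range Bᵀ)) (mem_toFinset.2 hB)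
    exact hle (subset_span ⟨j, rfl⟩)
  calc _ ≤ finrank K (t.toFinset.sup fun B => span K (range Bᵀ) : Submodule K (m → K)) :=
        Submodule.finrank_mono hcols
    _ ≤ ∑ B ∈ t.toFinset, finrank K (span K (range Bᵀ)) := finrank_finset_sup_le _ _
    _ ≤ ∑ _B ∈ t.toFinset, r := Finset.sum_le_sum fun B hB => by
        obtain ⟨k, rfl⟩ := htA (mem_toFinset.1 hB)
        exact (Matrix.rank_eq_finrank_span_cols (A k)).symm.trans_le (hA k)
    _ = finrank K (span K (range A)) * r := by
        rw [Finset.sum_const, smul_eq_mul, ← hspan, finrank_span_set_eq_card hli]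

end LinearAlgebra

theorem stmt3_general (n1 n2 m1 m2 r : ℕ) :
    ∀ᵐ γ : Fin (n1 - n2) → Fin n1 → ℂ,
      ∀ A : Fin n1 → Matrix (Fin m1) (Fin m2) ℂ,
        (∀ k : Fin n1, (A k).rank ≤ r) →
        (∀ i : Fin (n1 - n2), ∑ k : Fin n1, γ i k • A k = 0) →
        Module.finrank ℂ
          (Submodule.span ℂ
            (Set.range fun p : Fin n1 × Fin m2 =>
              fun i : Fin m1 => A p.1 i p.2)) ≤ n2 * r := by
  filter_upwards [ae_linearIndependent (𝕜 := ℂ) volume (n1 - n2) (by simp)]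
    with γ hγ A hrank hrel
  have hdim := finrank_span_range_add_card_le A γ hγ hrel
  simp only [Fintype.card_fin] at hdim
  calc _ ≤ finrank ℂ (span ℂ (range A)) * r := finrank_span_cols_le A hrank
    _ ≤ n2 * r := by gcongr; omega

/-- For Lebesgue-almost every coefficient array `γ ∈ ℂ^{q × n1}`
(`q = n1 - n2`, `0 ≤ n2 < n1`), every family `A_1,…,A_{n1}` of complex `m1 × m2`
matrices of rank at most `r` with `γ_{i1} A_1 + ⋯ + γ_{i n1} A_{n1} = 0` for all
`i = 1,…,q` satisfies `dim C(A_1,…,A_{n1}) ≤ n2 · r`. -/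
theorem stmt3 (n1 n2 m1 m2 r : ℕ) (hn : n2 < n1) :
    ∀ᵐ γ : Fin (n1 - n2) → Fin n1 → ℂ,
      ∀ A : Fin n1 → Matrix (Fin m1) (Fin m2) ℂ,
        (∀ k : Fin n1, (A k).rank ≤ r) →
        (∀ i : Fin (n1 - n2), ∑ k : Fin n1, γ i k • A k = 0) →
        Module.finrank ℂ
          (Submodule.span ℂ
            (Set.range fun p : Fin n1 × Fin m2 =>
              fun i : Fin m1 => A p.1 i p.2)) ≤ n2 * r :=
  stmt3_general n1 n2 m1 m2 r
end

section
/- Fix positive integers K_r, K_t, M_r, N_t and κ_t with 1 ≤ κ_t < K_t, and suppose N_t ≤ K_r M_r. Then for Lebesgue-almost every choice of the matrices H_{jk} ∈ ℂ^{M_r × N_t} (j = 1,…,K_r, k = 1,…,K_t) and the scalars γ^j_{ik} ∈ ℂ (i = 1,…,K_t − κ_t, j = 1,…,K_r, k = 1,…,K_t), the coefficient matrix C has full rank, i.e., rank(C) = min( K_r (K_t − κ_t) M_r , K_t N_t ). -/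
/-!
The entries of `C` are polynomials in the entries of the `H_{jk}` and the `γ^j_{ik}`, so every
minor of `C` is a polynomial function of the data. The zero set of a nonzero complex polynomial is
Lebesgue-null (induction on the number of variables, with Fubini), so it suffices to exhibit one
choice of data at which a fixed `m × m` minor, `m = min (K_r (K_t - κ_t) M_r) (K_t N_t)`, does not
vanish. Taking `γ^j_{ik} = k ^ i` and a suitable `0/1` pattern for the `H_{jk}` makes this minor
block diagonal, with Vandermonde blocks of size at most `K_t - κ_t` whose nodes are distinct
residues modulo `K_t`.
-/

open MeasureTheory

/-- The coefficient matrix `C`: the `K_r (K_t − κ_t) M_r × K_t N_t` block matrix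
whose block rows are indexed by pairs `(j, i)` and block columns by `k`, with
the `((j,i), k)` block equal to `γ^j_{ik} H_{jk}`. -/
def coefMatrix (Kr Kt κt Mr Nt : ℕ)
    (H : Fin Kr → Fin Kt → Matrix (Fin Mr) (Fin Nt) ℂ)
    (γ : Fin Kr → Fin (Kt - κt) → Fin Kt → ℂ) :
    Matrix ((Fin Kr × Fin (Kt - κt)) × Fin Mr) (Fin Kt × Fin Nt) ℂ :=
  Matrix.of fun ri cj => γ ri.1.1 ri.1.2 cj.1 * H ri.1.1 cj.1 ri.2 cj.2

theorem MeasureTheory.measurePreserving_curry (ι κ X : Type*) [Fintype ι] [Fintype κ]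
    [MeasurableSpace X] (μ : Measure X) [SigmaFinite μ] :
    MeasurePreserving (MeasurableEquiv.curry ι κ X) (Measure.pi fun _ ↦ μ)
      (Measure.pi fun _ ↦ Measure.pi fun _ ↦ μ) where
  measurable := (MeasurableEquiv.curry ι κ X).measurable
  map_eq := by
    refine (Measure.pi_eq_generateFrom (fun _ ↦ generateFrom_pi) (fun _ ↦ isPiSystem_pi)
      (fun _ ↦ Measure.FiniteSpanningSetsIn.pi fun _ ↦ μ.toFiniteSpanningSetsIn) ?_).symm
    intro s hs
    choose t ht hst using hs
    obtain rfl : s = fun i ↦ Set.univ.pi (t i) := funext fun i ↦ (hst i).symm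
    have hpre : MeasurableEquiv.curry ι κ X ⁻¹' Set.univ.pi (fun i ↦ Set.univ.pi (t i)) =
        Set.univ.pi fun p : ι × κ ↦ t p.1 p.2 := by
      ext; simp [Set.mem_pi]
    rw [MeasurableEquiv.map_apply, hpre, Measure.pi_pi, Fintype.prod_prod_type]
    simp_rw [Measure.pi_pi]

theorem MeasureTheory.volume_measurePreserving_uncurry (ι κ X : Type*) [Fintype ι] [Fintype κ]
    [MeasureSpace X] [SigmaFinite (volume : Measure X)] :
    MeasurePreserving (Function.uncurry : (ι → κ → X) → ι × κ → X) :=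
  (measurePreserving_curry ι κ X volume).symm

namespace Polynomial

theorem ae_eval_ne_zero {R : Type*} [CommRing R] [IsDomain R] [MeasurableSpace R]
    {μ : Measure R} [NullSingletonClass μ] {p : Polynomial R} (hp : p ≠ 0) :
    ∀ᵐ z ∂μ, p.eval z ≠ 0 :=
  measure_eq_zero_iff_ae_notMem.1 ((finite_setOfPred_isRoot hp).measure_zero μ)

end Polynomial

namespace MvPolynomial

theorem ae_eval_ne_zero_fin : ∀ {n : ℕ} {P : MvPolynomial (Fin n) ℂ}, P ≠ 0 →
    ∀ᵐ x : Fin n → ℂ, eval x P ≠ 0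
  | 0, P, hP => .of_forall fun x ↦ by
      rw [eq_C_of_isEmpty P, eval_C]
      exact fun h ↦ hP (by rw [eq_C_of_isEmpty P, h, map_zero])
  | n + 1, P, hP => by
    set Q := finSuccEquiv ℂ n P
    have hQ : Q ≠ 0 := (EmbeddingLike.map_ne_zero_iff).2 hP
    have hmeas : MeasurableSet {z : ℂ × (Fin n → ℂ) | eval (Fin.cons z.1 z.2) P ≠ 0} :=
      (isOpen_ne_fun ((continuous_eval P).comp (by fun_prop)) continuous_const).measurableSet
    have hslices : ∀ᵐ y : Fin n → ℂ, ∀ᵐ a : ℂ, eval (Fin.cons a y) P ≠ 0 := by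
      filter_upwards [ae_eval_ne_zero_fin (Polynomial.leadingCoeff_ne_zero.2 hQ)] with y hy
      have hQy : Q.map (eval y) ≠ 0 := fun h ↦ hy <| by
        rw [Polynomial.leadingCoeff, ← Polynomial.coeff_map, h, Polynomial.coeff_zero]
      simpa only [eval_eq_eval_mv_eval'] using Polynomial.ae_eval_ne_zero hQy
    have hprod := (Measure.ae_prod_iff_ae_ae hmeas).2 ((Measure.ae_ae_comm hmeas).2 hslices)
    filter_upwards [(measurePreserving_piFinSuccAbove (fun _ ↦ volume) 0).quasiMeasurePreserving.ae
      hprod] with x hx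
    simpa using hx

theorem ae_eval_ne_zero {σ : Type*} [Fintype σ] {P : MvPolynomial σ ℂ} (hP : P ≠ 0) :
    ∀ᵐ x : σ → ℂ, eval x P ≠ 0 := by
  let e := Fintype.equivFin σ
  have hP' : rename e P ≠ 0 := (map_ne_zero_iff _ (rename_injective _ e.injective)).2 hP
  filter_upwards [(volume_measurePreserving_piCongrLeft (fun _ ↦ ℂ) e).quasiMeasurePreserving.ae
    (ae_eval_ne_zero_fin hP')] with x hx
  rwa [eval_rename, show (MeasurableEquiv.piCongrLeft (fun _ ↦ ℂ) e x) ∘ e = x from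
    _root_.funext fun b ↦ Equiv.piCongrLeft_apply_apply (fun _ ↦ ℂ) e x b] at hx

end MvPolynomial

theorem Nat.eq_of_div_eq_of_mod_eq {a b s n : ℕ} (hs : 0 < s) (hsn : s ≤ n)
    (hdiv : a / s = b / s) (hmod : a % n = b % n) : a = b := by
  refine Nat.ModEq.eq_of_abs_lt hmod (abs_sub_lt_iff.2 ?_)
  have ha := Nat.div_add_mod a s
  have hb := Nat.div_add_mod b s
  have ha' := Nat.mod_lt a hs
  have hb' := Nat.mod_lt b hs
  rw [hdiv] at ha
  constructor <;> omega

namespace Matrix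

variable {R : Type*} [CommRing R]

def blockVandermonde (s m : ℕ) (x : ℕ → R) : Matrix (Fin m) (Fin m) R :=
  of fun p q ↦ if (p : ℕ) / s = (q : ℕ) / s then x q ^ ((p : ℕ) % s) else 0

theorem blockVandermonde_of_le {s m : ℕ} (x : ℕ → R) (hm : m ≤ s) :
    blockVandermonde s m x = (vandermonde fun q : Fin m ↦ x q)ᵀ := by
  ext p q
  have hp : (p : ℕ) < s := p.2.trans_le hm
  have hq : (q : ℕ) < s := q.2.trans_le hm
  simp [blockVandermonde, vandermonde, Nat.div_eq_of_lt hp, Nat.div_eq_of_lt hq,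
    Nat.mod_eq_of_lt hp]

theorem blockVandermonde_add_submatrix {s : ℕ} (hs : 0 < s) (n : ℕ) (x : ℕ → R) :
    (blockVandermonde s (s + n) x).submatrix finSumFinEquiv finSumFinEquiv =
      fromBlocks (blockVandermonde s s x) 0 0 (blockVandermonde s n fun q ↦ x (s + q)) := by
  ext (p | p) (q | q) <;>
    simp [blockVandermonde, Nat.add_div_left _ hs, Nat.div_eq_of_lt p.2, Nat.div_eq_of_lt q.2]

theorem det_blockVandermonde_ne_zero [IsDomain R] {s : ℕ} (hs : 0 < s) (m : ℕ) (x : ℕ → R)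
    (hx : ∀ a b, a / s = b / s → x a = x b → a = b) : (blockVandermonde s m x).det ≠ 0 := by
  induction m using Nat.strong_induction_on generalizing x with
  | _ m ih =>
  rcases le_or_gt m s with hms | hsm
  · rw [blockVandermonde_of_le x hms, det_transpose, det_vandermonde_ne_zero_iff]
    intro p q hpq
    exact Fin.ext <| hx p q (by rw [Nat.div_eq_of_lt (p.2.trans_le hms),
      Nat.div_eq_of_lt (q.2.trans_le hms)]) hpq
  · obtain ⟨n, rfl⟩ := Nat.exists_eq_add_of_le hsm.le
    have hx' (a b : ℕ) (hab : a / s = b / s) (hxab : x (s + a) = x (s + b)) : a = b := by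
      have := hx (s + a) (s + b) (by simp [Nat.add_div_left _ hs, hab]) hxab
      omega
    rw [← det_submatrix_equiv_self finSumFinEquiv, blockVandermonde_add_submatrix hs,
      det_fromBlocks_zero₂₁]
    exact mul_ne_zero (ih s (by omega) x hx) (ih n (by omega) _ hx')

theorem le_rank_of_det_submatrix_ne_zero {K m n : Type*} [Field K] [Fintype n] {r : ℕ}
    (A : Matrix m n K) (ρ : Fin r → m) (κ : Fin r → n) (h : (A.submatrix ρ κ).det ≠ 0) :
    r ≤ A.rank :=
  calc r = (A.submatrix ρ κ).rank := by
        rw [rank_of_isUnit _ ((isUnit_iff_isUnit_det _).2 (isUnit_iff_ne_zero.2 h)),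
          Fintype.card_fin]
    _ ≤ A.rank := rank_submatrix_le A ρ κ

theorem ae_le_rank_map_eval {σ m n : Type*} [Fintype σ] [Fintype n] {r : ℕ}
    (A : Matrix m n (MvPolynomial σ ℂ)) (ρ : Fin r → m) (κ : Fin r → n) (w : σ → ℂ)
    (hw : ((A.map (MvPolynomial.eval w)).submatrix ρ κ).det ≠ 0) :
    ∀ᵐ y : σ → ℂ, r ≤ (A.map (MvPolynomial.eval y)).rank := by
  have heval (y : σ → ℂ) : MvPolynomial.eval y (A.submatrix ρ κ).det =
      ((A.map (MvPolynomial.eval y)).submatrix ρ κ).det := by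
    rw [RingHom.map_det, RingHom.mapMatrix_apply, submatrix_map]
  have hP : (A.submatrix ρ κ).det ≠ 0 := fun h ↦ hw <| by rw [← heval, h, map_zero]
  filter_upwards [MvPolynomial.ae_eval_ne_zero hP] with y hy
  exact le_rank_of_det_submatrix_ne_zero _ ρ κ (heval y ▸ hy)

end Matrix

section CoefficientMatrix

open MvPolynomial

variable (Kr Kt s Mr Nt : ℕ)

abbrev CoefVar : Type := ((Fin Kr × Fin Kt) × Fin Mr) × Fin Nt ⊕ (Fin Kr × Fin s) × Fin Kt

noncomputable def coefMatrixPoly :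
    Matrix ((Fin Kr × Fin s) × Fin Mr) (Fin Kt × Fin Nt) (MvPolynomial (CoefVar Kr Kt s Mr Nt) ℂ) :=
  Matrix.of fun a b ↦ X (.inr ((a.1.1, a.1.2), b.1)) * X (.inl (((a.1.1, b.1), a.2), b.2))

def flattenCoef (p : (Fin Kr → Fin Kt → Fin Mr → Fin Nt → ℂ) × (Fin Kr → Fin s → Fin Kt → ℂ)) :
    CoefVar Kr Kt s Mr Nt → ℂ :=
  Sum.elim (Function.uncurry (Function.uncurry (Function.uncurry p.1)))
    (Function.uncurry (Function.uncurry p.2))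

set_option synthInstance.maxSize 1000 in
theorem measurePreserving_flattenCoef :
    MeasurePreserving (flattenCoef Kr Kt s Mr Nt) (volume.prod volume) volume := by
  have hH := (volume_measurePreserving_uncurry ((Fin Kr × Fin Kt) × Fin Mr) (Fin Nt) ℂ).comp <|
    (volume_measurePreserving_uncurry (Fin Kr × Fin Kt) (Fin Mr) (Fin Nt → ℂ)).comp
      (volume_measurePreserving_uncurry (Fin Kr) (Fin Kt) (Fin Mr → Fin Nt → ℂ))
  have hγ := (volume_measurePreserving_uncurry (Fin Kr × Fin s) (Fin Kt) ℂ).comp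
    (volume_measurePreserving_uncurry (Fin Kr) (Fin s) (Fin Kt → ℂ))
  exact (volume_measurePreserving_sumPiEquivProdPi_symm (fun _ : CoefVar Kr Kt s Mr Nt ↦ ℂ)).comp
    (hH.prod hγ)

theorem coefMatrix_eq_map_eval (κt : ℕ)
    (p : (Fin Kr → Fin Kt → Fin Mr → Fin Nt → ℂ) × (Fin Kr → Fin (Kt - κt) → Fin Kt → ℂ)) :
    coefMatrix Kr Kt κt Mr Nt (fun j k ↦ Matrix.of (p.1 j k)) p.2 =
      (coefMatrixPoly Kr Kt (Kt - κt) Mr Nt).map (eval (flattenCoef Kr Kt (Kt - κt) Mr Nt p)) := by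
  ext ⟨⟨j, i⟩, r⟩ ⟨k, c⟩
  simp [coefMatrix, coefMatrixPoly, flattenCoef]

theorem exists_det_submatrix_coefMatrixPoly_ne_zero (hs : 0 < s) (hsK : s ≤ Kt) :
    ∃ (ρ : Fin (min (Kr * s * Mr) (Kt * Nt)) → (Fin Kr × Fin s) × Fin Mr)
      (κ : Fin (min (Kr * s * Mr) (Kt * Nt)) → Fin Kt × Fin Nt) (w : CoefVar Kr Kt s Mr Nt → ℂ),
      (((coefMatrixPoly Kr Kt s Mr Nt).map (eval w)).submatrix ρ κ).det ≠ 0 := by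
  set m := min (Kr * s * Mr) (Kt * Nt)
  have hmr : m ≤ Kr * Mr * s := (min_le_left _ _).trans_eq (by ring)
  have hmc : m ≤ Nt * Kt := (min_le_right _ _).trans_eq (by ring)
  let ρ (p : Fin m) : (Fin Kr × Fin s) × Fin Mr :=
    let p' : Fin (Kr * Mr * s) := Fin.castLE hmr p
    ((p'.divNat.divNat, p'.modNat), p'.divNat.modNat)
  let κ (q : Fin m) : Fin Kt × Fin Nt :=
    let q' : Fin (Nt * Kt) := Fin.castLE hmc q
    (q'.modNat, q'.divNat)
  -- Row `p = (j * Mr + r) * s + i` of the minor is `(j, i, r)` and column `q = c * Kt + k` is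
  -- `(k, c)`. With `γ^j_{ik} = k ^ i` and `H_{jk}[r, c] = 1` exactly when `q / s = p / s`, the
  -- minor is block diagonal with Vandermonde blocks on the nodes `q % Kt`.
  let w : CoefVar Kr Kt s Mr Nt → ℂ :=
    Sum.elim (fun t ↦ if ((t.2 : ℕ) * Kt + t.1.1.2) / s = t.1.1.1 * Mr + t.1.2 then 1 else 0)
      (fun t ↦ (t.2 : ℂ) ^ (t.1.2 : ℕ))
  refine ⟨ρ, κ, w, ?_⟩
  have hW : ((coefMatrixPoly Kr Kt s Mr Nt).map (eval w)).submatrix ρ κ =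
      Matrix.blockVandermonde s m fun q ↦ ((q % Kt : ℕ) : ℂ) := by
    ext p q
    simp [coefMatrixPoly, ρ, κ, w, Matrix.blockVandermonde, Nat.div_add_mod']
    exact if_congr eq_comm rfl rfl
  rw [hW]
  exact Matrix.det_blockVandermonde_ne_zero hs m _ fun a b hab h ↦
    Nat.eq_of_div_eq_of_mod_eq hs hsK hab (Nat.cast_injective h)

end CoefficientMatrix

theorem stmt6_general (Kr Kt Mr Nt κt : ℕ) (hκ2 : κt < Kt) :
    ∀ᵐ p : (Fin Kr → Fin Kt → Fin Mr → Fin Nt → ℂ) ×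
        (Fin Kr → Fin (Kt - κt) → Fin Kt → ℂ)
      ∂((volume : Measure (Fin Kr → Fin Kt → Fin Mr → Fin Nt → ℂ)).prod
        (volume : Measure (Fin Kr → Fin (Kt - κt) → Fin Kt → ℂ))),
      (coefMatrix Kr Kt κt Mr Nt (fun j k => Matrix.of (p.1 j k)) p.2).rank =
        min (Kr * (Kt - κt) * Mr) (Kt * Nt) := by
  obtain ⟨ρ, κ, w, hw⟩ :=
    exists_det_submatrix_coefMatrixPoly_ne_zero Kr Kt (Kt - κt) Mr Nt (by omega) (Nat.sub_le _ _)
  filter_upwards [(measurePreserving_flattenCoef Kr Kt (Kt - κt) Mr Nt).quasiMeasurePreserving.ae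
    (Matrix.ae_le_rank_map_eval _ ρ κ w hw)] with p hp
  rw [coefMatrix_eq_map_eval]
  set C := (coefMatrixPoly Kr Kt (Kt - κt) Mr Nt).map (MvPolynomial.eval (flattenCoef _ _ _ _ _ p))
  refine le_antisymm (le_min ?_ ?_) hp
  · simpa [mul_assoc] using C.rank_le_card_height
  · simpa using C.rank_le_card_width

/-- For positive integers `K_r, K_t, M_r, N_t, κ_t` with
`1 ≤ κ_t < K_t` and `N_t ≤ K_r M_r`, Lebesgue-almost every choice of the
matrices `H_{jk}` and scalars `γ^j_{ik}` makes the coefficient matrix `C` of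
full rank, i.e. `rank C = min (K_r (K_t − κ_t) M_r) (K_t N_t)`. -/
theorem stmt6 (Kr Kt Mr Nt κt : ℕ) (hKr : 0 < Kr) (hMr : 0 < Mr) (hNt : 0 < Nt)
    (hκ1 : 1 ≤ κt) (hκ2 : κt < Kt) (hN : Nt ≤ Kr * Mr) :
    ∀ᵐ p : (Fin Kr → Fin Kt → Fin Mr → Fin Nt → ℂ) ×
        (Fin Kr → Fin (Kt - κt) → Fin Kt → ℂ)
      ∂((volume : Measure (Fin Kr → Fin Kt → Fin Mr → Fin Nt → ℂ)).prod
        (volume : Measure (Fin Kr → Fin (Kt - κt) → Fin Kt → ℂ))),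
      (coefMatrix Kr Kt κt Mr Nt (fun j k => Matrix.of (p.1 j k)) p.2).rank =
        min (Kr * (Kt - κt) * Mr) (Kt * Nt) :=
  stmt6_general Kr Kt Mr Nt κt hκ2
end

section
/- Fix positive integers K_r, K_t, M_r, N_t and κ_t with 1 ≤ κ_t < K_t, and suppose N_t ≤ K_r M_r. Then there exist matrices H_{jk} ∈ ℂ^{M_r × N_t} (j = 1,…,K_r, k = 1,…,K_t) and scalars γ^j_{ik} ∈ ℂ (i = 1,…,K_t − κ_t, j = 1,…,K_r, k = 1,…,K_t) such that the coefficient matrix C has full rank: rank(C) = min( K_r (K_t − κ_t) M_r , K_t N_t ). -/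
section AuxLemmas
open Polynomial Finset
open Polynomial Finset

/-- Vandermonde-type independence: if ≤ n nodes and all power sums up to n vanish,
all coefficients vanish. -/
lemma vand_indep {ι : Type*} [DecidableEq ι] (n : ℕ) (s : Finset ι) (x : ι → ℂ)
    (hx : Set.InjOn x s) (hs : s.card ≤ n) (a : ι → ℂ)
    (h : ∀ i < n, ∑ k ∈ s, a k * x k ^ i = 0) : ∀ k ∈ s, a k = 0 := by
  intro k₀ hk₀
  set L : Polynomial ℂ := ∏ k ∈ s.erase k₀, (X - C (x k)) with hL
  have hdeg : L.natDegree = (s.erase k₀).card := by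
    rw [hL, natDegree_prod _ _ (fun k _ => X_sub_C_ne_zero (x k))]
    simp
  have hlt : L.natDegree < n := by
    rw [hdeg, Finset.card_erase_of_mem hk₀]
    have h1 : 0 < s.card := Finset.card_pos.2 ⟨k₀, hk₀⟩
    omega
  have key : ∑ k ∈ s, a k * L.eval (x k) = 0 := by
    have e1 : ∀ k ∈ s, a k * L.eval (x k)
        = ∑ i ∈ Finset.range n, L.coeff i * (a k * x k ^ i) := by
      intro k _
      rw [eval_eq_sum_range' hlt, Finset.mul_sum]
      exact Finset.sum_congr rfl fun i _ => by ring
    rw [Finset.sum_congr rfl e1, Finset.sum_comm]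
    refine Finset.sum_eq_zero fun i hi => ?_
    rw [← Finset.mul_sum, h i (Finset.mem_range.1 hi), mul_zero]
  have hzero : ∀ k ∈ s, k ≠ k₀ → a k * L.eval (x k) = 0 := by
    intro k hk hne
    have : L.eval (x k) = 0 := by
      rw [hL, eval_prod]
      exact Finset.prod_eq_zero (Finset.mem_erase.2 ⟨hne, hk⟩) (by simp)
    rw [this, mul_zero]
  have key2 : a k₀ * L.eval (x k₀) = 0 := by
    rw [← Finset.sum_eq_single_of_mem k₀ hk₀ (fun k hk hne => hzero k hk hne)]
    exact key
  have hne : L.eval (x k₀) ≠ 0 := by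
    rw [hL, eval_prod]
    refine Finset.prod_ne_zero_iff.2 fun k hk => ?_
    simp only [eval_sub, eval_X, eval_C, sub_ne_zero]
    intro heq
    exact (Finset.mem_erase.1 hk).1 (hx (Finset.mem_of_mem_erase hk) hk₀ heq.symm)
  exact (mul_eq_zero.1 key2).resolve_right hne

/-- Polynomial-type independence: a polynomial of degree < n vanishing on ≥ n nodes is 0. -/
lemma poly_indep {ι : Type*} (n : ℕ) (s : Finset ι) (x : ι → ℂ)
    (hx : Set.InjOn x s) (hs : n ≤ s.card) (b : ℕ → ℂ)
    (h : ∀ k ∈ s, ∑ i ∈ Finset.range n, b i * x k ^ i = 0) : ∀ i < n, b i = 0 := by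
  intro i₀ hi₀
  set p : Polynomial ℂ := ∑ i ∈ Finset.range n, C (b i) * X ^ i with hp
  have hdeg : p.natDegree < n := by
    have : p.natDegree ≤ n - 1 := by
      refine natDegree_sum_le_of_forall_le _ _ fun i hi => ?_
      refine (natDegree_C_mul_le _ _).trans ?_
      rw [natDegree_X_pow]
      exact Nat.le_sub_one_of_lt (Finset.mem_range.1 hi)
    omega
  have heval : ∀ y ∈ s.image x, p.eval y = 0 := by
    intro y hy
    obtain ⟨k, hk, rfl⟩ := Finset.mem_image.1 hy
    rw [hp]
    simp only [eval_finset_sum, eval_mul, eval_pow, eval_C, eval_X]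
    exact h k hk
  have hcard : p.natDegree < (s.image x).card := by
    rw [Finset.card_image_of_injOn hx]; omega
  have hp0 : p = 0 := eq_zero_of_natDegree_lt_card_of_eval_eq_zero' p _ heval hcard
  have := congrArg (fun q => Polynomial.coeff q i₀) hp0
  simp only [hp, finset_sum_coeff, coeff_C_mul, coeff_X_pow, coeff_zero] at this
  rwa [Finset.sum_eq_single_of_mem i₀ (Finset.mem_range.2 hi₀) (fun j _ hj => by
    simp [Ne.symm hj]), if_pos rfl, mul_one] at this

/-- Uniqueness of Euclidean decomposition. -/
lemma euclid_inj {Nt k k' c c' : ℕ} (hc : c < Nt) (hc' : c' < Nt)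
    (h : k * Nt + c = k' * Nt + c') : k = k' ∧ c = c' := by
  have hk : k = k' := by
    rcases Nat.lt_trichotomy k k' with hlt | he | hgt
    · exfalso
      have : k * Nt + c < k' * Nt + c' := by
        calc k * Nt + c < (k + 1) * Nt := by
              rw [add_mul, one_mul]; exact Nat.add_lt_add_left hc _
        _ ≤ k' * Nt := Nat.mul_le_mul_right _ hlt
        _ ≤ k' * Nt + c' := Nat.le_add_right _ _
      exact absurd h (Nat.ne_of_lt this)
    · exact he
    · exfalso
      have : k' * Nt + c' < k * Nt + c := by
        calc k' * Nt + c' < (k' + 1) * Nt := by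
              rw [add_mul, one_mul]; exact Nat.add_lt_add_left hc' _
        _ ≤ k * Nt := Nat.mul_le_mul_right _ hgt
        _ ≤ k * Nt + c := Nat.le_add_right _ _
      exact absurd h.symm (Nat.ne_of_lt this)
  exact ⟨hk, by subst hk; omega⟩

lemma mod_c_inj {G Nt k c c' : ℕ} (hNG : Nt ≤ G) (hc : c < Nt) (hc' : c' < Nt)
    (h : (k * Nt + c) % G = (k * Nt + c') % G) : c = c' := by
  have h2 : c ≡ c' [MOD G] := Nat.ModEq.add_left_cancel' (k * Nt) h
  rwa [Nat.ModEq, Nat.mod_eq_of_lt (lt_of_lt_of_le hc hNG),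
    Nat.mod_eq_of_lt (lt_of_lt_of_le hc' hNG)] at h2

end AuxLemmas

/-- For positive integers `K_r, K_t, M_r, N_t, κ_t` with
`1 ≤ κ_t < K_t` and `N_t ≤ K_r M_r`, there exist matrices `H_{jk}` and scalars
`γ^j_{ik}` such that the coefficient matrix `C` has full rank:
`rank C = min (K_r (K_t − κ_t) M_r) (K_t N_t)`. -/
theorem stmt7 (Kr Kt Mr Nt κt : ℕ) (hKr : 0 < Kr) (hMr : 0 < Mr) (hNt : 0 < Nt)
    (hκ1 : 1 ≤ κt) (hκ2 : κt < Kt) (hN : Nt ≤ Kr * Mr) :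
    ∃ (H : Fin Kr → Fin Kt → Matrix (Fin Mr) (Fin Nt) ℂ)
      (γ : Fin Kr → Fin (Kt - κt) → Fin Kt → ℂ),
      (coefMatrix Kr Kt κt Mr Nt H γ).rank =
        min (Kr * (Kt - κt) * Mr) (Kt * Nt) := by
  classical
  refine ⟨fun j k => Matrix.of fun r c =>
      if ((k : ℕ) * Nt + (c : ℕ)) % (Kr * Mr) = (j : ℕ) * Mr + (r : ℕ) then 1 else 0,
    fun _ i k => (k : ℂ) ^ (i : ℕ), ?_⟩
  set M := coefMatrix Kr Kt κt Mr Nt _ _ with hM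
  have hG : 0 < Kr * Mr := Nat.mul_pos hKr hMr
  have hKtNt : ∀ (k : Fin Kt) (c : Fin Nt), (k : ℕ) * Nt + (c : ℕ) < Kt * Nt := by
    intro k c
    calc (k : ℕ) * Nt + (c : ℕ) < (k : ℕ) * Nt + Nt := Nat.add_lt_add_left c.isLt _
      _ = ((k : ℕ) + 1) * Nt := by ring
      _ ≤ Kt * Nt := Nat.mul_le_mul_right _ k.isLt
  rcases le_or_gt (Kt * Nt) (Kr * (Kt - κt) * Mr) with hA | hB
  · rw [min_eq_right hA]
    have hinj : Function.Injective M.mulVecLin := by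
      rw [← LinearMap.ker_eq_bot, LinearMap.ker_eq_bot']
      intro v hv
      funext σ
      obtain ⟨k₀, c₀⟩ := σ
      show v (k₀, c₀) = 0
      set g : ℕ := ((k₀ : ℕ) * Nt + (c₀ : ℕ)) % (Kr * Mr) with hgdef
      have hgG : g < Kr * Mr := Nat.mod_lt _ hG
      set s₀ : Finset (Fin Kt) :=
        Finset.univ.filter
          (fun k => ∃ c : Fin Nt, ((k : ℕ) * Nt + (c : ℕ)) % (Kr * Mr) = g) with hs₀
      set a : Fin Kt → ℂ := fun k =>
        ∑ c : Fin Nt,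
          if ((k : ℕ) * Nt + (c : ℕ)) % (Kr * Mr) = g then v (k, c) else 0 with ha
      have hrow : ∀ i : Fin (Kt - κt), ∑ k : Fin Kt, a k * (k : ℂ) ^ (i : ℕ) = 0 := by
        intro i
        have hj₀ : g / Mr < Kr := (Nat.div_lt_iff_lt_mul hMr).2 hgG
        have hjr : (g / Mr) * Mr + g % Mr = g := by
          rw [Nat.mul_comm]; exact Nat.div_add_mod g Mr
        have h0 := congrFun hv ((⟨g / Mr, hj₀⟩, i), ⟨g % Mr, Nat.mod_lt _ hMr⟩)
        simp only [Matrix.mulVecLin_apply, Matrix.mulVec, dotProduct,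
          Pi.zero_apply] at h0
        rw [Fintype.sum_prod_type] at h0
        calc ∑ k : Fin Kt, a k * (k : ℂ) ^ (i : ℕ)
            = ∑ k : Fin Kt, ∑ c : Fin Nt,
              M ((⟨g / Mr, hj₀⟩, i), ⟨g % Mr, Nat.mod_lt _ hMr⟩) (k, c) * v (k, c) := by
              refine Finset.sum_congr rfl fun k _ => ?_
              rw [ha]
              simp only []
              rw [Finset.sum_mul]
              refine Finset.sum_congr rfl fun c _ => ?_
              show _ = ((k : ℂ) ^ (i : ℕ) *
                (if ((k : ℕ) * Nt + (c : ℕ)) % (Kr * Mr)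
                    = (g / Mr) * Mr + (g % Mr) then (1:ℂ) else 0)) * v (k, c)
              rw [hjr]
              by_cases hcond : ((k : ℕ) * Nt + (c : ℕ)) % (Kr * Mr) = g
              · rw [if_pos hcond, if_pos hcond, mul_one]; ring
              · rw [if_neg hcond, if_neg hcond, mul_zero, zero_mul, zero_mul]
          _ = 0 := h0
      have hanot : ∀ k : Fin Kt, k ∉ s₀ → a k = 0 := by
        intro k hk
        rw [ha]
        refine Finset.sum_eq_zero fun c _ => ?_
        rw [if_neg]
        intro hcond
        exact hk (Finset.mem_filter.2 ⟨Finset.mem_univ _, ⟨c, hcond⟩⟩)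
      have hvand : ∀ i < Kt - κt, ∑ k ∈ s₀, a k * (k : ℂ) ^ i = 0 := by
        intro i hi
        rw [Finset.sum_subset (Finset.subset_univ s₀)
          (fun k _ hk => by rw [hanot k hk, zero_mul])]
        exact hrow ⟨i, hi⟩
      have hcard : s₀.card ≤ Kt - κt := by
        set f : Fin Kt → ℕ := fun k =>
          if h : ∃ c : Fin Nt, ((k : ℕ) * Nt + (c : ℕ)) % (Kr * Mr) = g then
            ((k : ℕ) * Nt + ((h.choose : Fin Nt) : ℕ)) / (Kr * Mr) else 0 with hf
        have h1 : ∀ k ∈ s₀, f k ∈ Finset.range (Kt - κt) := by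
          intro k hk
          have hex := (Finset.mem_filter.1 hk).2
          rw [hf]
          simp only []
          rw [dif_pos hex, Finset.mem_range]
          refine (Nat.div_lt_iff_lt_mul hG).2 ?_
          calc (k : ℕ) * Nt + (hex.choose : ℕ) < Kt * Nt := hKtNt k hex.choose
            _ ≤ Kr * (Kt - κt) * Mr := hA
            _ = (Kt - κt) * (Kr * Mr) := by ring
        have h2 : Set.InjOn f s₀ := by
          intro k hk k' hk' heq
          have hexk := (Finset.mem_filter.1 hk).2
          have hexk' := (Finset.mem_filter.1 hk').2
          rw [hf] at heq
          simp only [] at heq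
          rw [dif_pos hexk, dif_pos hexk'] at heq
          have ht : (k : ℕ) * Nt + (hexk.choose : ℕ) = (k' : ℕ) * Nt + (hexk'.choose : ℕ) := by
            have e1 := Nat.div_add_mod ((k : ℕ) * Nt + (hexk.choose : ℕ)) (Kr * Mr)
            have e2 := Nat.div_add_mod ((k' : ℕ) * Nt + (hexk'.choose : ℕ)) (Kr * Mr)
            rw [hexk.choose_spec] at e1
            rw [hexk'.choose_spec] at e2
            rw [← e1, ← e2, heq]
          exact Fin.ext (euclid_inj hexk.choose.isLt hexk'.choose.isLt ht).1
        have h3 := Finset.card_le_card_of_injOn f h1 h2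
        rwa [Finset.card_range] at h3
      have hnodes : Set.InjOn (fun k : Fin Kt => ((k : ℕ) : ℂ)) s₀ :=
        fun k _ k' _ h => Fin.ext (Nat.cast_injective h)
      have hker := vand_indep (Kt - κt) s₀ (fun k : Fin Kt => ((k : ℕ) : ℂ))
        hnodes hcard a hvand
      have hk₀mem : k₀ ∈ s₀ :=
        Finset.mem_filter.2 ⟨Finset.mem_univ _, ⟨c₀, hgdef.symm⟩⟩
      have h3 : a k₀ = v (k₀, c₀) := by
        rw [ha]
        simp only []
        rw [Finset.sum_eq_single_of_mem c₀ (Finset.mem_univ _) ?_, if_pos hgdef.symm]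
        intro c _ hc
        rw [if_neg]
        intro hcond
        exact hc (Fin.ext (mod_c_inj hN c.isLt c₀.isLt (hcond.trans hgdef)))
      rw [← h3]
      exact hker k₀ hk₀mem
    calc M.rank = Module.finrank ℂ (LinearMap.range M.mulVecLin) := rfl
      _ = Module.finrank ℂ ((Fin Kt × Fin Nt) → ℂ) :=
          LinearMap.finrank_range_of_inj hinj
      _ = Kt * Nt := by simp [Module.finrank_pi]
  · rw [min_eq_left hB.le, ← Matrix.rank_transpose M]
    have hinj : Function.Injective M.transpose.mulVecLin := by
      rw [← LinearMap.ker_eq_bot, LinearMap.ker_eq_bot']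
      intro v hv
      funext ρ
      obtain ⟨⟨j₀, i₀⟩, r₀⟩ := ρ
      show v ((j₀, i₀), r₀) = 0
      set g : ℕ := (j₀ : ℕ) * Mr + (r₀ : ℕ) with hgdef
      have hgG : g < Kr * Mr := by
        calc g < ((j₀ : ℕ) + 1) * Mr := by
              rw [add_mul, one_mul]; exact Nat.add_lt_add_left r₀.isLt _
          _ ≤ Kr * Mr := Nat.mul_le_mul_right _ j₀.isLt
      set s₀ : Finset (Fin Kt) :=
        Finset.univ.filter
          (fun k => ∃ c : Fin Nt, ((k : ℕ) * Nt + (c : ℕ)) % (Kr * Mr) = g) with hs₀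
      have hcol : ∀ k ∈ s₀,
          ∑ i ∈ Finset.range (Kt - κt),
            (if h : i < Kt - κt then v ((j₀, ⟨i, h⟩), r₀) else 0)
              * ((k : ℕ) : ℂ) ^ i = 0 := by
        intro k hk
        obtain ⟨c, hc⟩ := (Finset.mem_filter.1 hk).2
        have h0 := congrFun hv (k, c)
        simp only [Matrix.mulVecLin_apply, Matrix.mulVec, dotProduct,
          Matrix.transpose_apply, Pi.zero_apply] at h0
        rw [Fintype.sum_prod_type, Fintype.sum_prod_type] at h0
        have hterm : ∀ (j : Fin Kr) (i : Fin (Kt - κt)) (r : Fin Mr),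
            M ((j, i), r) (k, c) * v ((j, i), r)
              = if j = j₀ ∧ r = r₀ then (k : ℂ) ^ (i : ℕ) * v ((j, i), r) else 0 := by
          intro j i r
          show ((k : ℂ) ^ (i : ℕ) *
              (if ((k : ℕ) * Nt + (c : ℕ)) % (Kr * Mr) = (j : ℕ) * Mr + (r : ℕ)
                then (1 : ℂ) else 0)) * v ((j, i), r) = _
          rw [hc]
          by_cases hcnd : j = j₀ ∧ r = r₀
          · obtain ⟨rfl, rfl⟩ := hcnd
            rw [if_pos hgdef, mul_one, if_pos ⟨rfl, rfl⟩]
          · rw [if_neg, if_neg hcnd, mul_zero, zero_mul]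
            intro habs
            obtain ⟨h1, h2⟩ := euclid_inj r₀.isLt r.isLt (hgdef.symm.trans habs)
            exact hcnd ⟨Fin.ext h1.symm, Fin.ext h2.symm⟩
        have h1 : ∑ i : Fin (Kt - κt), (k : ℂ) ^ (i : ℕ) * v ((j₀, i), r₀) = 0 := by
          calc ∑ i : Fin (Kt - κt), (k : ℂ) ^ (i : ℕ) * v ((j₀, i), r₀)
              = ∑ j : Fin Kr, ∑ i : Fin (Kt - κt), ∑ r : Fin Mr,
                (if j = j₀ ∧ r = r₀ then (k : ℂ) ^ (i : ℕ) * v ((j, i), r) else 0) := by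
                simp [ite_and, Finset.sum_ite_eq, Finset.sum_ite_eq']
            _ = ∑ j : Fin Kr, ∑ i : Fin (Kt - κt), ∑ r : Fin Mr,
                M ((j, i), r) (k, c) * v ((j, i), r) := by
                refine Finset.sum_congr rfl fun j _ => Finset.sum_congr rfl
                  fun i _ => Finset.sum_congr rfl fun r _ => (hterm j i r).symm
            _ = 0 := h0
        rw [← Fin.sum_univ_eq_sum_range
          (fun i => (if h : i < Kt - κt then v ((j₀, ⟨i, h⟩), r₀) else 0)
            * ((k : ℕ) : ℂ) ^ i) (Kt - κt)]
        exact (Finset.sum_congr rfl fun (i : Fin (Kt - κt)) _ => by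
          rw [dif_pos i.isLt]; exact mul_comm _ _).trans h1
      have hcard : Kt - κt ≤ s₀.card := by
        have hKt : 0 < Kt := lt_of_le_of_lt (Nat.zero_le _) hκ2
        set f : ℕ → Fin Kt := fun m =>
          if h : (g + m * (Kr * Mr)) / Nt < Kt
            then ⟨(g + m * (Kr * Mr)) / Nt, h⟩ else ⟨0, hKt⟩ with hf
        have hlt : ∀ m < Kt - κt, g + m * (Kr * Mr) < Kt * Nt := by
          intro m hm
          calc g + m * (Kr * Mr) < Kr * Mr + m * (Kr * Mr) :=
                Nat.add_lt_add_right hgG _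
            _ = (m + 1) * (Kr * Mr) := by ring
            _ ≤ (Kt - κt) * (Kr * Mr) := Nat.mul_le_mul_right _ (by omega)
            _ = Kr * (Kt - κt) * Mr := by ring
            _ < Kt * Nt := hB
        have hdiv : ∀ m < Kt - κt, (g + m * (Kr * Mr)) / Nt < Kt :=
          fun m hm => (Nat.div_lt_iff_lt_mul hNt).2 (hlt m hm)
        have h1 : ∀ m ∈ Finset.range (Kt - κt), f m ∈ s₀ := by
          intro m hm
          have hmlt := Finset.mem_range.1 hm
          rw [hf]
          simp only []
          rw [dif_pos (hdiv m hmlt)]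
          refine Finset.mem_filter.2 ⟨Finset.mem_univ _,
            ⟨⟨(g + m * (Kr * Mr)) % Nt, Nat.mod_lt _ hNt⟩, ?_⟩⟩
          show ((g + m * (Kr * Mr)) / Nt * Nt + (g + m * (Kr * Mr)) % Nt) % (Kr * Mr) = g
          rw [Nat.mul_comm ((g + m * (Kr * Mr)) / Nt) Nt, Nat.div_add_mod,
            Nat.add_mul_mod_self_right]
          exact Nat.mod_eq_of_lt hgG
        have hmono : ∀ m m', m < m' → m' < Kt - κt →
            (g + m * (Kr * Mr)) / Nt < (g + m' * (Kr * Mr)) / Nt := by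
          intro m m' hmm' hm'
          have hstep : g + m * (Kr * Mr) + Nt ≤ g + m' * (Kr * Mr) := by
            have h4 : (m + 1) * (Kr * Mr) ≤ m' * (Kr * Mr) := Nat.mul_le_mul_right _ hmm'
            have h5 : Nt ≤ Kr * Mr := hN
            have h6 : (m + 1) * (Kr * Mr) = m * (Kr * Mr) + Kr * Mr := by ring
            omega
          calc (g + m * (Kr * Mr)) / Nt < (g + m * (Kr * Mr)) / Nt + 1 :=
                Nat.lt_succ_self _
            _ = (g + m * (Kr * Mr) + Nt) / Nt := (Nat.add_div_right _ hNt).symm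
            _ ≤ (g + m' * (Kr * Mr)) / Nt := Nat.div_le_div_right hstep
        have h2 : Set.InjOn f (Finset.range (Kt - κt)) := by
          intro m hm m' hm' heq
          have hmlt := Finset.mem_range.1 (Finset.mem_coe.1 hm)
          have hmlt' := Finset.mem_range.1 (Finset.mem_coe.1 hm')
          rw [hf] at heq
          simp only [] at heq
          rw [dif_pos (hdiv m hmlt), dif_pos (hdiv m' hmlt')] at heq
          have heq2 : (g + m * (Kr * Mr)) / Nt = (g + m' * (Kr * Mr)) / Nt :=
            congrArg Fin.val heq
          rcases Nat.lt_trichotomy m m' with h | h | h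
          · exact absurd heq2 (Nat.ne_of_lt (hmono m m' h hmlt'))
          · exact h
          · exact absurd heq2.symm (Nat.ne_of_lt (hmono m' m h hmlt))
        have h3 := Finset.card_le_card_of_injOn f h1 h2
        rwa [Finset.card_range] at h3
      have hnodes : Set.InjOn (fun k : Fin Kt => ((k : ℕ) : ℂ)) s₀ :=
        fun k _ k' _ h => Fin.ext (Nat.cast_injective h)
      have hres := poly_indep (Kt - κt) s₀ (fun k : Fin Kt => ((k : ℕ) : ℂ))
        hnodes hcard
        (fun i => if h : i < Kt - κt then v ((j₀, ⟨i, h⟩), r₀) else 0)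
        hcol (i₀ : ℕ) i₀.isLt
      have h9 : (if h : (i₀ : ℕ) < Kt - κt
          then v ((j₀, ⟨(i₀ : ℕ), h⟩), r₀) else 0) = v ((j₀, i₀), r₀) := by
        rw [dif_pos i₀.isLt]
      exact h9.symm.trans hres
    calc M.transpose.rank
        = Module.finrank ℂ (LinearMap.range M.transpose.mulVecLin) := rfl
      _ = Module.finrank ℂ (((Fin Kr × Fin (Kt - κt)) × Fin Mr) → ℂ) :=
          LinearMap.finrank_range_of_inj hinj
      _ = Kr * (Kt - κt) * Mr := by simp [Module.finrank_pi, mul_assoc]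
end

section
/- Fix positive integers K_r, K_t, M_r, N_t, κ_t, d with 1 ≤ κ_t < K_t, (K_t − 1) N_t ≤ K_r (K_t − κ_t) M_r < K_t N_t, and d ≤ K_t N_t − K_r (K_t − κ_t) M_r. Let H_{jk} ∈ ℂ^{M_r × N_t} (j = 1,…,K_r, k = 1,…,K_t) and γ^j_{ik} ∈ ℂ (i = 1,…,K_t − κ_t, j = 1,…,K_r, k = 1,…,K_t) be given, and assume: (i) the coefficient matrix C has full row rank K_r (K_t − κ_t) M_r; (ii) for every j = 1,…,K_r, the (K_t − κ_t) × (K_t − κ_t) matrix (γ^j_{ik})_{1 ≤ i,k ≤ K_t − κ_t} is invertible; and (iii) for every k_0 ∈ {1,…,K_t}, the submatrix of C obtained by deleting the k_0-th block of N_t columns has full column rank (K_t − 1) N_t. Then there exist matrices V_1, …, V_{K_t} ∈ ℂ^{N_t × d}, each of full column rank d, such that for every j = 1,…,K_r and every i = 1,…,K_t − κ_t one has γ^j_{i1} H_{j1} V_1 + γ^j_{i2} H_{j2} V_2 + ⋯ + γ^j_{i K_t} H_{j K_t} V_{K_t} = 0, and for every j = 1,…,K_r one has dim C( H_{j1} V_1,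 H_{j2} V_2, …, H_{j K_t} V_{K_t} ) ≤ κ_t · d. -/
/-- Under the feasibility constraints
`(K_t − 1) N_t ≤ K_r (K_t − κ_t) M_r < K_t N_t` and
`d ≤ K_t N_t − K_r (K_t − κ_t) M_r`, if (i) the coefficient matrix `C` has full
row rank, (ii) for each `j` the square matrix `(γ^j_{ik})_{i,k ≤ K_t − κ_t}` is
invertible, and (iii) for each `k_0` the submatrix of `C` obtained by deleting
the `k_0`-th block of `N_t` columns has full column rank, then there exist full
column rank precoders `V_1,…,V_{K_t} ∈ ℂ^{N_t × d}` satisfying the interference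
alignment equations `∑_k γ^j_{ik} H_{jk} V_k = 0` and, for each receiver `j`,
`dim C(H_{j1} V_1, …, H_{j K_t} V_{K_t}) ≤ κ_t · d`. -/
theorem stmt9 (Kr Kt Mr Nt κt d : ℕ)
    (hKr : 0 < Kr) (hMr : 0 < Mr) (hNt : 0 < Nt) (hd : 0 < d)
    (hκ1 : 1 ≤ κt) (hκ2 : κt < Kt)
    (hc1 : (Kt - 1) * Nt ≤ Kr * (Kt - κt) * Mr)
    (hc2 : Kr * (Kt - κt) * Mr < Kt * Nt)
    (hdle : d ≤ Kt * Nt - Kr * (Kt - κt) * Mr)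
    (H : Fin Kr → Fin Kt → Matrix (Fin Mr) (Fin Nt) ℂ)
    (γ : Fin Kr → Fin (Kt - κt) → Fin Kt → ℂ)
    (hrow : LinearIndependent ℂ
      (fun ri : (Fin Kr × Fin (Kt - κt)) × Fin Mr =>
        coefMatrix Kr Kt κt Mr Nt H γ ri))
    (hΓ : ∀ j : Fin Kr,
      IsUnit (Matrix.of fun i k : Fin (Kt - κt) =>
        γ j i (Fin.castLE (Nat.sub_le Kt κt) k)).det)
    (hcol : ∀ k0 : Fin Kt, LinearIndependent ℂ
      (fun cj : {k : Fin Kt // k ≠ k0} × Fin Nt =>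
        fun ri : (Fin Kr × Fin (Kt - κt)) × Fin Mr =>
          coefMatrix Kr Kt κt Mr Nt H γ ri (cj.1.val, cj.2))) :
    ∃ V : Fin Kt → Matrix (Fin Nt) (Fin d) ℂ,
      (∀ k : Fin Kt,
        LinearIndependent ℂ (fun c : Fin d => fun i : Fin Nt => V k i c)) ∧
      (∀ (j : Fin Kr) (i : Fin (Kt - κt)),
        ∑ k : Fin Kt, γ j i k • (H j k * V k) = 0) ∧
      (∀ j : Fin Kr,
        Module.finrank ℂ
          (Submodule.span ℂ
            (Set.range fun pc : Fin Kt × Fin d =>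
              fun i : Fin Mr => (H j pc.1 * V pc.1) i pc.2)) ≤ κt * d) := by
  classical
  set Cmat := coefMatrix Kr Kt κt Mr Nt H γ with hCdef
  set φ : ((Fin Kt × Fin Nt) → ℂ) →ₗ[ℂ] (((Fin Kr × Fin (Kt - κt)) × Fin Mr) → ℂ) :=
    Cmat.mulVecLin with hφdef
  -- kernel has dimension ≥ d
  have hker : d ≤ Module.finrank ℂ (LinearMap.ker φ) := by
    have h1 := LinearMap.finrank_range_add_finrank_ker φ
    have h2 : Module.finrank ℂ ((Fin Kt × Fin Nt) → ℂ) = Kt * Nt := by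
      simp [Module.finrank_pi]
    have h3 : Module.finrank ℂ (LinearMap.range φ) ≤ Kr * (Kt - κt) * Mr := by
      have h4 := (LinearMap.range φ).finrank_le
      have h5 : Module.finrank ℂ (((Fin Kr × Fin (Kt - κt)) × Fin Mr) → ℂ)
          = Kr * (Kt - κt) * Mr := by simp [Module.finrank_pi]
      omega
    omega
  obtain ⟨w0, hw0⟩ := exists_linearIndependent_of_le_finrank (R := ℂ)
    (M := LinearMap.ker φ) hker
  set w : Fin d → (Fin Kt × Fin Nt → ℂ) := fun c => (w0 c : Fin Kt × Fin Nt → ℂ) with hwdef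
  have hwli : LinearIndependent ℂ w :=
    hw0.map' (LinearMap.ker φ).subtype (Submodule.ker_subtype _)
  have hwker : ∀ c, Cmat.mulVec (w c) = 0 := by
    intro c
    have h := LinearMap.mem_ker.mp (w0 c).2
    exact h
  -- key: a kernel vector with vanishing k0-block is zero
  have key : ∀ (k0 : Fin Kt) (x : Fin Kt × Fin Nt → ℂ),
      Cmat.mulVec x = 0 → (∀ n, x (k0, n) = 0) → x = 0 := by
    intro k0 x hx hblock
    have h0 : ∀ p : {k : Fin Kt // k ≠ k0} × Fin Nt, x (p.1.val, p.2) = 0 := by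
      refine Fintype.linearIndependent_iff.mp (hcol k0)
        (fun p => x (p.1.val, p.2)) ?_
      funext ri
      have hxr := congrFun hx ri
      rw [Pi.zero_apply] at hxr
      have hsum : (0 : ℂ) = ∑ k : Fin Kt, ∑ n : Fin Nt, x (k, n) * Cmat ri (k, n) := by
        rw [← hxr]
        simp [Matrix.mulVec, dotProduct, Fintype.sum_prod_type, mul_comm]
      have hzero : ∑ n : Fin Nt, x (k0, n) * Cmat ri (k0, n) = 0 := by
        simp [hblock]
      have herase : ∑ k : Fin Kt, ∑ n : Fin Nt, x (k, n) * Cmat ri (k, n)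
          = ∑ k ∈ Finset.univ.erase k0, ∑ n : Fin Nt, x (k, n) * Cmat ri (k, n) := by
        rw [← Finset.sum_erase_add _ _ (Finset.mem_univ k0), hzero, add_zero]
      have hsubtype : ∑ k ∈ Finset.univ.erase k0, ∑ n : Fin Nt, x (k, n) * Cmat ri (k, n)
          = ∑ k : {k : Fin Kt // k ≠ k0}, ∑ n : Fin Nt, x (k.val, n) * Cmat ri (k.val, n) := by
        exact Finset.sum_subtype (p := fun k : Fin Kt => k ≠ k0) (Finset.univ.erase k0)
          (fun k => by simp) (fun k => ∑ n : Fin Nt, x (k, n) * Cmat ri (k, n))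
      simp only [Finset.sum_apply, Pi.smul_apply, smul_eq_mul, Pi.zero_apply]
      rw [Fintype.sum_prod_type]
      rw [hsubtype.symm, herase.symm, ← hsum]
    funext p
    obtain ⟨k, n⟩ := p
    by_cases hk : k = k0
    · subst hk; exact hblock n
    · exact h0 ⟨⟨k, hk⟩, n⟩
  -- the precoders
  set V : Fin Kt → Matrix (Fin Nt) (Fin d) ℂ :=
    fun k => Matrix.of fun n c => w c (k, n) with hVdef
  have hVrank : ∀ k : Fin Kt,
      LinearIndependent ℂ (fun c : Fin d => fun i : Fin Nt => V k i c) := by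
    intro k0
    rw [Fintype.linearIndependent_iff]
    intro g hg
    set x : Fin Kt × Fin Nt → ℂ := ∑ c, g c • w c with hxdef
    have hxker : Cmat.mulVec x = 0 := by
      have : φ x = 0 := by
        rw [hxdef, map_sum]
        simp only [map_smul]
        have : ∀ c : Fin d, φ (w c) = 0 := by
          intro c; simpa [hφdef] using hwker c
        simp [this]
      simpa [hφdef] using this
    have hxblock : ∀ n, x (k0, n) = 0 := by
      intro n
      have := congrFun hg n
      simpa [hxdef, hVdef, Finset.sum_apply] using this
    have hx0 : x = 0 := key k0 x hxker hxblock
    exact Fintype.linearIndependent_iff.mp hwli g hx0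
  -- alignment equations
  have halign : ∀ (j : Fin Kr) (i : Fin (Kt - κt)),
      ∑ k : Fin Kt, γ j i k • (H j k * V k) = 0 := by
    intro j i
    ext r c
    have h0 := congrFun (hwker c) ((j, i), r)
    rw [Pi.zero_apply] at h0
    simp only [Matrix.mulVec, dotProduct, Fintype.sum_prod_type] at h0
    simp only [Matrix.sum_apply, Matrix.smul_apply, Matrix.mul_apply, smul_eq_mul,
      Matrix.zero_apply, hVdef, Matrix.of_apply]
    rw [← h0]
    refine Finset.sum_congr rfl (fun k _ => ?_)
    simp [hCdef, coefMatrix, Finset.mul_sum, mul_assoc]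
  refine ⟨V, hVrank, halign, ?_⟩
  intro j
  -- rank bound
  set u : Fin Kt → Fin d → (Fin Mr → ℂ) :=
    fun k c => fun r => (H j k * V k) r c with hudef
  have hemb : ∀ a : Fin κt, Kt - κt + a.val < Kt := by
    intro a; have := a.isLt; omega
  set e : Fin κt → Fin Kt := fun a => ⟨Kt - κt + a.val, hemb a⟩ with hedef
  set T : Submodule ℂ (Fin Mr → ℂ) :=
    Submodule.span ℂ (Set.range fun p : Fin κt × Fin d => u (e p.1) p.2) with hTdef
  have hval : ∀ (i : Fin (Kt - κt)) (c : Fin d), ∑ k : Fin Kt, γ j i k • u k c = 0 := by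
    intro i c
    funext r
    have := congrFun (congrFun (halign j i) r) c
    simpa [Finset.sum_apply, Matrix.sum_apply, hudef] using this
  have h' : Kt - κt + κt = Kt := by omega
  have hsplit : ∀ (f : Fin Kt → (Fin Mr → ℂ)),
      ∑ k : Fin Kt, f k =
        (∑ k' : Fin (Kt - κt), f (Fin.castLE (Nat.sub_le Kt κt) k'))
        + ∑ a : Fin κt, f (e a) := by
    intro f
    have heq := Fintype.sum_equiv (finSumFinEquiv.trans (finCongr h'))
      (fun s : Fin (Kt - κt) ⊕ Fin κt => f ((finSumFinEquiv.trans (finCongr h')) s))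
      f (fun s => rfl)
    have h1 : ∀ k' : Fin (Kt - κt),
        (finSumFinEquiv.trans (finCongr h')) (Sum.inl k')
          = Fin.castLE (Nat.sub_le Kt κt) k' := by
      intro k'; apply Fin.ext; simp
    have h2 : ∀ a : Fin κt,
        (finSumFinEquiv.trans (finCongr h')) (Sum.inr a) = e a := by
      intro a; apply Fin.ext; simp [hedef]
    rw [← heq, Fintype.sum_sum_type]
    simp only [h1, h2]
  have hmemT : ∀ (k : Fin Kt) (c : Fin d), u k c ∈ T := by
    intro k c
    by_cases hk : k.val < Kt - κt
    · -- the interesting case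
      set Γ' : Matrix (Fin (Kt - κt)) (Fin (Kt - κt)) ℂ :=
        Matrix.of fun i m => γ j i (Fin.castLE (Nat.sub_le Kt κt) m) with hΓ'def
      have hinv : Γ'⁻¹ * Γ' = 1 := Matrix.nonsing_inv_mul _ (hΓ j)
      set k' : Fin (Kt - κt) := ⟨k.val, hk⟩ with hk'def
      have hkk : k = Fin.castLE (Nat.sub_le Kt κt) k' := by ext; rfl
      have hrel : ∀ i : Fin (Kt - κt),
          ∑ m, Γ' i m • u (Fin.castLE (Nat.sub_le Kt κt) m) c
            = - ∑ a : Fin κt, γ j i (e a) • u (e a) c := by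
        intro i
        have h1 := hval i c
        rw [hsplit] at h1
        have : ∑ m, Γ' i m • u (Fin.castLE (Nat.sub_le Kt κt) m) c
            = ∑ m, γ j i (Fin.castLE (Nat.sub_le Kt κt) m)
                • u (Fin.castLE (Nat.sub_le Kt κt) m) c := rfl
        rw [this]
        exact eq_neg_of_add_eq_zero_left h1
      have hfinal : u k c
          = ∑ i, Γ'⁻¹ k' i • (- ∑ a : Fin κt, γ j i (e a) • u (e a) c) := by
        calc u k c = ∑ m, (1 : Matrix (Fin (Kt - κt)) (Fin (Kt - κt)) ℂ) k' m
              • u (Fin.castLE (Nat.sub_le Kt κt) m) c := by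
              rw [hkk]
              simp [Matrix.one_apply, ite_smul]
          _ = ∑ m, (Γ'⁻¹ * Γ') k' m • u (Fin.castLE (Nat.sub_le Kt κt) m) c := by
              rw [hinv]
          _ = ∑ i, Γ'⁻¹ k' i • (∑ m, Γ' i m • u (Fin.castLE (Nat.sub_le Kt κt) m) c) := by
              simp only [Matrix.mul_apply, Finset.sum_smul, Finset.smul_sum, smul_smul]
              rw [Finset.sum_comm]
          _ = _ := by
              refine Finset.sum_congr rfl (fun i _ => ?_)
              rw [hrel i]
      rw [hfinal]
      refine Submodule.sum_mem _ (fun i _ => Submodule.smul_mem _ _ ?_)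
      refine Submodule.neg_mem _ (Submodule.sum_mem _ (fun a _ => Submodule.smul_mem _ _ ?_))
      exact Submodule.subset_span ⟨(a, c), rfl⟩
    · have hka : k = e ⟨k.val - (Kt - κt), by have := k.isLt; omega⟩ := by
        ext; simp [hedef]; omega
      rw [hka]
      exact Submodule.subset_span ⟨(⟨k.val - (Kt - κt), by have := k.isLt; omega⟩, c), rfl⟩
  have hsub : Submodule.span ℂ
      (Set.range fun pc : Fin Kt × Fin d =>
        fun i : Fin Mr => (H j pc.1 * V pc.1) i pc.2) ≤ T := by
    rw [Submodule.span_le]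
    rintro _ ⟨pc, rfl⟩
    exact hmemT pc.1 pc.2
  have h1 : Module.finrank ℂ T ≤ κt * d := by
    have h2 := finrank_span_le_card (R := ℂ)
      (Set.range fun p : Fin κt × Fin d => u (e p.1) p.2)
    calc Module.finrank ℂ T
        ≤ (Set.range fun p : Fin κt × Fin d => u (e p.1) p.2).toFinset.card := h2
      _ ≤ Fintype.card (Fin κt × Fin d) := by
          rw [Set.toFinset_range]
          exact Finset.card_image_le.trans (by simp)
      _ = κt * d := by simp
  exact le_trans (Submodule.finrank_mono hsub) h1
end
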